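/- Under the constraint ∑_{i=1}^k σᵢ² = k with σ₁ ≥ σ₂ ≥ ... ≥ σ_k ≥ 0, the softmax loss L(σ) = −log(exp(σ₁/τ)/∑_j exp(σ_j/τ)) attains its minimum uniquely at σ = (√k, 0, ..., 0). -/
import Mathlib


theorem stmt17 {k : ℕ} (hk : 0 < k) (τ : ℝ) (hτ : 0 < τ) :
    let i₁ : Fin k := ⟨0, hk⟩
    let L : (Fin k → ℝ) → ℝ :=
      fun s => -Real.log (Real.exp (s i₁ / τ) / ∑ j', Real.exp (s j' / τ))
    let σstar : Fin k → ℝ := fun j => if j = i₁ then Real.sqrt k else 0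
    (∀ i, 0 ≤ σstar i) ∧ Antitone σstar ∧ (∑ i, σstar i ^ 2 = (k : ℝ)) ∧
    ∀ σ : Fin k → ℝ, (∀ i, 0 ≤ σ i) → Antitone σ → (∑ i, σ i ^ 2 = (k : ℝ)) →
      L σstar ≤ L σ ∧ (L σstar = L σ → σ = σstar) := by
  intro i₁ L σstar
  have hτ0 : τ ≠ 0 := ne_of_gt hτ
  have hknn : (0:ℝ) ≤ k := Nat.cast_nonneg k
  have hsq : Real.sqrt k ^ 2 = (k:ℝ) := Real.sq_sqrt hknn
  have hstar_i₁ : σstar i₁ = Real.sqrt k := by simp [σstar]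
  set g : (Fin k → ℝ) → ℝ := fun σ => ∑ j, Real.exp ((σ j - σ i₁) / τ) with hg
  have hgpos : ∀ σ : Fin k → ℝ, 0 < g σ := fun σ =>
    Finset.sum_pos (fun j _ => Real.exp_pos _) ⟨i₁, Finset.mem_univ _⟩
  have hLg : ∀ σ : Fin k → ℝ, L σ = Real.log (g σ) := by
    intro σ
    have hS : (0:ℝ) < ∑ j', Real.exp (σ j' / τ) :=
      Finset.sum_pos (fun j _ => Real.exp_pos _) ⟨i₁, Finset.mem_univ _⟩
    have hgS : g σ = (∑ j', Real.exp (σ j' / τ)) / Real.exp (σ i₁ / τ) := by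
      rw [hg, Finset.sum_div]
      refine Finset.sum_congr rfl fun j _ => ?_
      rw [← Real.exp_sub, sub_div]
    have hinv : Real.exp (σ i₁ / τ) / ∑ j', Real.exp (σ j' / τ) = (g σ)⁻¹ := by
      rw [hgS]
      field_simp
    show -Real.log (Real.exp (σ i₁ / τ) / ∑ j', Real.exp (σ j' / τ)) = Real.log (g σ)
    rw [hinv, Real.log_inv, neg_neg]
  refine ⟨?_, ?_, ?_, ?_⟩
  · intro i
    by_cases h : i = i₁ <;> simp [σstar, h, Real.sqrt_nonneg]
  · intro i j hij
    by_cases hj : j = i₁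
    · have hi : i = i₁ := by
        subst hj
        have : i₁ ≤ i := by
          simp only [Fin.le_def]
          exact Nat.zero_le _
        exact le_antisymm hij this
      rw [hi, hj]
    · have hzj : σstar j = 0 := by simp [σstar, hj]
      rw [hzj]
      by_cases hi : i = i₁ <;> simp [σstar, hi, Real.sqrt_nonneg]
  · have hpt : ∀ i : Fin k, σstar i ^ 2 = if i = i₁ then (k:ℝ) else 0 := by
      intro i; by_cases h : i = i₁ <;> simp [σstar, h, hsq]
    rw [Finset.sum_congr rfl fun i _ => hpt i]
    simp
  · intro σ hnn hanti hsum
    have h1 : σ i₁ ≤ Real.sqrt k := by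
      have h2 : σ i₁ ^ 2 ≤ (k:ℝ) := by
        rw [← hsum]
        exact Finset.single_le_sum (fun j _ => sq_nonneg (σ j)) (Finset.mem_univ i₁)
      calc σ i₁ = Real.sqrt (σ i₁ ^ 2) := (Real.sqrt_sq (hnn i₁)).symm
        _ ≤ Real.sqrt k := Real.sqrt_le_sqrt h2
    have hterm : ∀ j : Fin k,
        Real.exp ((σstar j - σstar i₁) / τ) ≤ Real.exp ((σ j - σ i₁) / τ) := by
      intro j
      apply Real.exp_le_exp.mpr
      apply (div_le_div_iff_of_pos_right hτ).mpr
      by_cases hj : j = i₁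
      · subst hj; simp
      · have hzj : σstar j = 0 := by simp [σstar, hj]
        rw [hzj, hstar_i₁]
        have := hnn j
        linarith
    have hgle : g σstar ≤ g σ := Finset.sum_le_sum fun j _ => hterm j
    constructor
    · rw [hLg, hLg]
      exact Real.log_le_log (hgpos σstar) hgle
    · intro heq
      rw [hLg, hLg] at heq
      have hgeq : g σstar = g σ :=
        Real.log_injOn_pos (Set.mem_Ioi.mpr (hgpos σstar)) (Set.mem_Ioi.mpr (hgpos σ)) heq
      have hall := (Finset.sum_eq_sum_iff_of_le fun j _ => hterm j).mp hgeq
      have hzero : ∀ j : Fin k, j ≠ i₁ → σ j = 0 := by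
        intro j hj
        have h := Real.exp_injective (hall j (Finset.mem_univ j))
        have h' : σstar j - σstar i₁ = σ j - σ i₁ := by
          field_simp at h
          linarith
        have hzj : σstar j = 0 := by simp [σstar, hj]
        rw [hzj, hstar_i₁] at h'
        have := hnn j
        linarith
      have hs : σ i₁ ^ 2 = (k:ℝ) := by
        have hstep : ∑ i : Fin k, σ i ^ 2 = σ i₁ ^ 2 :=
          Finset.sum_eq_single_of_mem (f := fun i => σ i ^ 2) i₁ (Finset.mem_univ i₁)
            (fun j _ hj => by simp [hzero j hj])
        rw [← hstep, hsum]
      have hsv : σ i₁ = Real.sqrt k := by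
        rw [← hs, Real.sqrt_sq (hnn i₁)]
      funext j
      by_cases hj : j = i₁
      · rw [hj]; simpa [σstar] using hsv
      · simp [σstar, hj, hzero j hj]
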